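/- Let P be an n×n real row-stochastic matrix, P* the Cesàro limit of P^m, and r ∈ ℝ^n. Then the Abel limit of the discounted value function equals the gain: lim_{γ → 1⁻} (1 − γ) (I − γP)⁻¹ r = P* r. -/

import Mathlib

/-!
Write `M γ = 1 - γ P + γ P*`. Since `P^m / m` is, up to `o(1)`, a difference of consecutive Cesàro
means, it tends to `0`; passing to the limit in the Cesàro means then gives
`P P* = P* P = P* P* = P*`. A matrix `B` with `B (1 - P + P*) = 0` satisfies `B P* = 0` and
`B P = B`, hence `B = B P* = 0`; in the Artinian ring of matrices this makes `M 1` invertible.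
The resolvent splits along `P*` and `1 - P*`:
  `(1 - γ) (1 - γ P)⁻¹ = P* + (1 - γ) (1 - P*) (M γ)⁻¹`,
and `(M γ)⁻¹ → (M 1)⁻¹` stays bounded as `γ → 1`, so the second term vanishes in the limit.
-/

open Finset Filter Topology Matrix

/-- A square real matrix is row-stochastic if all entries are nonnegative and
every row sums to 1. -/
def RowStochastic {n : ℕ} (P : Matrix (Fin n) (Fin n) ℝ) : Prop :=
  (∀ i j, 0 ≤ P i j) ∧ ∀ i, ∑ j, P i j = 1

section Cesaro

variable {A : Type*} [Ring A] [Algebra ℝ A]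

noncomputable def cesaroMean (a : A) (m : ℕ) : A := (m : ℝ)⁻¹ • ∑ k ∈ range m, a ^ k

theorem cesaroMean_succ_smul (a : A) {m : ℕ} (hm : m ≠ 0) :
    (1 + (m : ℝ)⁻¹) • cesaroMean a (m + 1) = cesaroMean a m + (m : ℝ)⁻¹ • a ^ m := by
  have hm' : (m : ℝ) ≠ 0 := Nat.cast_ne_zero.mpr hm
  have hcoef : (1 + (m : ℝ)⁻¹) * ((m + 1 : ℕ) : ℝ)⁻¹ = (m : ℝ)⁻¹ := by
    push_cast
    field_simp
  rw [cesaroMean, smul_smul, hcoef, sum_range_succ, smul_add, cesaroMean]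

variable [TopologicalSpace A] [IsTopologicalRing A] {a q : A}

theorem tendsto_inv_smul_pow_sub_one_of_tendsto_cesaroMean [ContinuousSMul ℝ A]
    (h : Tendsto (cesaroMean a) atTop (𝓝 q)) :
    Tendsto (fun m : ℕ => (m : ℝ)⁻¹ • (a ^ m - 1)) atTop (𝓝 0) := by
  have hinv : Tendsto (fun m : ℕ => (m : ℝ)⁻¹) atTop (𝓝 0) := tendsto_inv_atTop_nhds_zero_nat
  have hlim : Tendsto (fun m : ℕ => (1 + (m : ℝ)⁻¹) • cesaroMean a (m + 1) - cesaroMean a m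
      - (m : ℝ)⁻¹ • (1 : A)) atTop (𝓝 ((1 + 0 : ℝ) • q - q - (0 : ℝ) • (1 : A))) :=
    (((tendsto_const_nhds.add hinv).smul (h.comp (tendsto_add_atTop_nat 1))).sub h).sub
      (hinv.smul_const 1)
  rw [add_zero, one_smul, sub_self, zero_smul, sub_zero] at hlim
  refine hlim.congr' (eventually_ne_atTop 0 |>.mono fun m hm => ?_)
  dsimp only
  rw [cesaroMean_succ_smul a hm, smul_sub]
  abel

variable [T2Space A]

theorem mul_limit_of_mul_eq_of_tendsto_cesaroMean (h : Tendsto (cesaroMean a) atTop (𝓝 q)) {b : A}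
    (hb : b * a = b) : b * q = b := by
  have hpow : ∀ k, b * a ^ k = b := by
    intro k
    induction k with
    | zero => rw [pow_zero, mul_one]
    | succ k ih => rw [pow_succ, ← mul_assoc, ih, hb]
  have hconst : ∀ m ≠ 0, b * cesaroMean a m = b := by
    intro m hm
    rw [cesaroMean, mul_smul_comm, mul_sum, sum_congr rfl fun k _ => hpow k, sum_const,
      card_range, ← Nat.cast_smul_eq_nsmul ℝ, smul_smul, inv_mul_cancel₀ (Nat.cast_ne_zero.mpr hm),
      one_smul]
  exact tendsto_nhds_unique (h.const_mul b)
    (tendsto_const_nhds.congr' (eventually_ne_atTop 0 |>.mono fun m hm => (hconst m hm).symm))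

variable [ContinuousSMul ℝ A]

theorem mul_limit_of_tendsto_cesaroMean (h : Tendsto (cesaroMean a) atTop (𝓝 q)) : a * q = q := by
  have hlim : Tendsto (fun m : ℕ => (m : ℝ)⁻¹ • (a ^ m - 1)) atTop (𝓝 ((a - 1) * q)) := by
    refine (h.const_mul (a - 1)).congr fun m => ?_
    rw [cesaroMean, mul_smul_comm, mul_geom_sum]
  rw [← sub_eq_zero, ← sub_one_mul,
    tendsto_nhds_unique hlim (tendsto_inv_smul_pow_sub_one_of_tendsto_cesaroMean h)]

theorem limit_mul_of_tendsto_cesaroMean (h : Tendsto (cesaroMean a) atTop (𝓝 q)) : q * a = q := by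
  have hlim : Tendsto (fun m : ℕ => (m : ℝ)⁻¹ • (a ^ m - 1)) atTop (𝓝 (q * (a - 1))) := by
    refine (h.mul_const (a - 1)).congr fun m => ?_
    rw [cesaroMean, smul_mul_assoc, geom_sum_mul]
  rw [← sub_eq_zero, ← mul_sub_one,
    tendsto_nhds_unique hlim (tendsto_inv_smul_pow_sub_one_of_tendsto_cesaroMean h)]

theorem limit_mul_self_of_tendsto_cesaroMean (h : Tendsto (cesaroMean a) atTop (𝓝 q)) :
    q * q = q :=
  mul_limit_of_mul_eq_of_tendsto_cesaroMean h (limit_mul_of_tendsto_cesaroMean h)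

theorem isUnit_one_sub_add_of_tendsto_cesaroMean [IsArtinianRing A]
    (h : Tendsto (cesaroMean a) atTop (𝓝 q)) : IsUnit (1 - a + q) := by
  have hq : (1 - a + q) * q = q := by
    rw [add_mul, sub_mul, one_mul, mul_limit_of_tendsto_cesaroMean h,
      limit_mul_self_of_tendsto_cesaroMean h, sub_self, zero_add]
  refine IsArtinianRing.isUnit_iff_isRightRegular.mpr
    (isRightRegular_iff_left_eq_zero_of_mul.mpr fun b hb => ?_)
  have hbq : b * q = 0 := by rw [← hq, ← mul_assoc, hb, zero_mul]
  have hba : b * a = b := by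
    rw [mul_add, hbq, add_zero, mul_sub, mul_one, sub_eq_zero] at hb
    exact hb.symm
  rw [← mul_limit_of_mul_eq_of_tendsto_cesaroMean h hba, hbq]

end Cesaro

namespace Matrix

variable {ι : Type*} [Fintype ι] [DecidableEq ι]

theorem smul_inv_one_sub_smul_eq {K : Type*} [Field K] {P Q : Matrix ι ι K} (hPQ : P * Q = Q)
    (hQP : Q * P = Q) (hQQ : Q * Q = Q) {γ : K} (hγ : γ ≠ 1) (hM : IsUnit (1 - γ • P + γ • Q).det) :
    (1 - γ) • (1 - γ • P)⁻¹ = Q + (1 - γ) • ((1 - Q) * (1 - γ • P + γ • Q)⁻¹) := by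
  have hγ' : 1 - γ ≠ 0 := sub_ne_zero.mpr hγ.symm
  have hQ : (1 - γ • P) * Q = (1 - γ) • Q := by
    rw [sub_mul, one_mul, smul_mul_assoc, hPQ, sub_smul, one_smul]
  have hcomm : (1 - γ • P) * (1 - Q) = (1 - Q) * (1 - γ • P + γ • Q) := by
    simp only [sub_mul, mul_sub, mul_add, one_mul, mul_one, smul_mul_assoc, mul_smul_comm, hPQ,
      hQP, hQQ, smul_sub, sub_self, smul_zero]
    abel
  have hinv : (1 - γ • P) * ((1 - γ)⁻¹ • Q + (1 - Q) * (1 - γ • P + γ • Q)⁻¹) = 1 := by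
    rw [mul_add, mul_smul_comm, hQ, smul_smul, inv_mul_cancel₀ hγ', one_smul, ← mul_assoc,
      hcomm, mul_assoc, mul_nonsing_inv _ hM, mul_one, add_sub_cancel]
  rw [inv_eq_right_inv hinv, smul_add, smul_smul, mul_inv_cancel₀ hγ', one_smul]

theorem tendsto_smul_inv_one_sub_smul_of_tendsto_cesaroMean {P Q : Matrix ι ι ℝ}
    (h : Tendsto (cesaroMean P) atTop (𝓝 Q)) :
    Tendsto (fun γ : ℝ => (1 - γ) • (1 - γ • P)⁻¹) (𝓝[≠] 1) (𝓝 Q) := by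
  set M : ℝ → Matrix ι ι ℝ := fun γ => 1 - γ • P + γ • Q with hM
  have hMcont : Continuous M := by fun_prop
  have hM1 : IsUnit (M 1).det := by
    rw [← isUnit_iff_isUnit_det]
    simpa [hM] using isUnit_one_sub_add_of_tendsto_cesaroMean h
  have hdet : ∀ᶠ γ in 𝓝 1, IsUnit (M γ).det := by
    simp only [isUnit_iff_ne_zero] at hM1 ⊢
    exact (hMcont.matrix_det.continuousAt).eventually_ne hM1
  have hinv : Tendsto (fun γ => (M γ)⁻¹) (𝓝 1) (𝓝 (M 1)⁻¹) :=
    (continuousAt_matrix_inv _ (by simpa using continuousAt_inv₀ hM1.ne_zero)).tendsto.comp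
      hMcont.continuousAt
  have hlim : Tendsto (fun γ : ℝ => Q + (1 - γ) • ((1 - Q) * (M γ)⁻¹)) (𝓝 1)
      (𝓝 (Q + (1 - 1 : ℝ) • ((1 - Q) * (M 1)⁻¹))) :=
    tendsto_const_nhds.add ((tendsto_const_nhds.sub tendsto_id).smul (hinv.const_mul _))
  rw [sub_self, zero_smul, add_zero] at hlim
  refine (hlim.mono_left nhdsWithin_le_nhds).congr' ?_
  filter_upwards [self_mem_nhdsWithin, nhdsWithin_le_nhds hdet] with γ hγ hγM
  exact (smul_inv_one_sub_smul_eq (mul_limit_of_tendsto_cesaroMean h)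
    (limit_mul_of_tendsto_cesaroMean h) (limit_mul_self_of_tendsto_cesaroMean h) hγ hγM).symm

end Matrix

theorem abel_limit_gain_general {n : ℕ} (P : Matrix (Fin n) (Fin n) ℝ)
    (r : Fin n → ℝ) (Pstar : Matrix (Fin n) (Fin n) ℝ)
    (hPstar : Tendsto (fun m : ℕ => (m : ℝ)⁻¹ • ∑ k ∈ Finset.range m, P ^ k)
      atTop (𝓝 Pstar)) :
    Tendsto (fun γ : ℝ => (1 - γ) • (1 - γ • P)⁻¹.mulVec r)
      (𝓝[<] (1 : ℝ)) (𝓝 (Pstar.mulVec r)) := by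
  have habel := (tendsto_smul_inv_one_sub_smul_of_tendsto_cesaroMean hPstar).mono_left
    (nhdsLT_le_nhdsNE 1)
  have hmulVec : Continuous fun A : Matrix (Fin n) (Fin n) ℝ => A *ᵥ r :=
    continuous_id.matrix_mulVec continuous_const
  simpa only [Function.comp_def, smul_mulVec] using (hmulVec.tendsto Pstar).comp habel

/-- Abel limit: `(1 - γ)(I - γP)⁻¹ r → P* r` as `γ → 1⁻`, where `P*` is
the Cesàro limit of the powers of `P`. -/
theorem abel_limit_gain {n : ℕ} (P : Matrix (Fin n) (Fin n) ℝ)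
    (hP : RowStochastic P) (r : Fin n → ℝ) (Pstar : Matrix (Fin n) (Fin n) ℝ)
    (hPstar : Tendsto (fun m : ℕ => (m : ℝ)⁻¹ • ∑ k ∈ Finset.range m, P ^ k)
      atTop (𝓝 Pstar)) :
    Tendsto (fun γ : ℝ => (1 - γ) • (1 - γ • P)⁻¹.mulVec r)
      (𝓝[<] (1 : ℝ)) (𝓝 (Pstar.mulVec r)) :=
  abel_limit_gain_general P r Pstar hPstar
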